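/- arXiv:1611.10299 — 2 statements merged into one kernel-verified Lean document; each statement's English description precedes it below -/
import Mathlib

section
/- If p = p(n) ≫ ((log n)/n)^{1/2}, then asymptotically almost surely G ∈ G(n,p) satisfies: for every vertex v ∈ V(G) and every J ⊆ N_G(v) with |J| ≥ pn/100, all but at most 100/p vertices x ∈ V(G) \ J satisfy |N_G(x) ∩ J| > p²n/200. -/
/-!
If the property fails at `v`, there are `J ⊆ N(v)` with `|J| = ⌈pn/100⌉` and a set `A` of
`⌊100/p⌋` vertices outside `J ∪ {v}` that send at most `t = ⌊|A| p²n/200⌋ ≤ pn/2` edges to `J`.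
For a fixed triple `(v, J, A)` this has probability at most `p^|J| 2^t (1 - p/2)^(|A||J|)`
(Markov's inequality for `2^(t - e(A, J))`), and there are at most `n C(n,|J|) C(n,|A|)` triples.
Since `|A||J| p/2 ≈ pn/2` exceeds `|J| log (100e) + t log 2 + (|A| + 2) log n ≤ 0.42 pn` as soon as
`p²n ≥ 10⁵ log n`, the union bound is at most `1/n`.
-/

open MeasureTheory Filter Topology SimpleGraph

namespace MonochromaticTrees

variable {V : Type*} {C : Type*}

/-- A subgraph `T` of `G` is a *monochromatic tree* with respect to the
edge-colouring `φ` if it is either empty or a tree, and all of its edges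
receive the same colour under `φ`. -/
def IsMonoTree (G : SimpleGraph V) (φ : Sym2 V → C) (T : G.Subgraph) : Prop :=
  (T.verts = ∅ ∨ T.coe.IsTree) ∧ ∃ c : C, ∀ e ∈ T.edgeSet, φ e = c

/-- `φ → Π₂`: the vertex set can be partitioned into the vertex sets of two
monochromatic trees. -/
def MonoTreePartition2 (G : SimpleGraph V) (φ : Sym2 V → Bool) : Prop :=
  ∃ T₁ T₂ : G.Subgraph, IsMonoTree G φ T₁ ∧ IsMonoTree G φ T₂ ∧
    Disjoint T₁.verts T₂.verts ∧ T₁.verts ∪ T₂.verts = Set.univ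

/-- `G → Π₂`: every 2-colouring of the edges admits a partition of the vertex
set into the vertex sets of two monochromatic trees. -/
def ArrowPi2 (G : SimpleGraph V) : Prop :=
  ∀ φ : Sym2 V → Bool, MonoTreePartition2 G φ

/-- Partition of the vertex set into the vertex sets of `r` monochromatic
trees for an `r`-colouring `φ`. -/
def MonoTreePartitionR (G : SimpleGraph V) (r : ℕ) (φ : Sym2 V → Fin r) : Prop :=
  ∃ T : Fin r → G.Subgraph, (∀ i, IsMonoTree G φ (T i)) ∧
    (Set.univ.PairwiseDisjoint fun i => (T i).verts) ∧ (⋃ i, (T i).verts) = Set.univ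

/-- `G → Π_r`. -/
def ArrowPiR (G : SimpleGraph V) (r : ℕ) : Prop :=
  ∀ φ : Sym2 V → Fin r, MonoTreePartitionR G r φ

/-- There is a monochromatic `u`–`v` path. -/
def MonoPath (G : SimpleGraph V) (φ : Sym2 V → C) (u v : V) : Prop :=
  ∃ w : G.Walk u v, w.IsPath ∧ ∃ c : C, ∀ e ∈ w.edges, φ e = c

/-- The spanning subgraph of `G` consisting of the edges of colour `c`. -/
def colourGraph (G : SimpleGraph V) (φ : Sym2 V → Bool) (c : Bool) : SimpleGraph V :=
  SimpleGraph.fromEdgeSet {e | e ∈ G.edgeSet ∧ φ e = c}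

/-- The set `R^φ` (for `c = true`, i.e. red) resp. `B^φ` (for `c = false`,
i.e. blue) of vertices `v` with `d_c(v) > d(v)/3`. -/
def bigColourSet (G : SimpleGraph V) (φ : Sym2 V → Bool) (c : Bool) : Set V :=
  {v | (G.neighborSet v).ncard < 3 * ((colourGraph G φ c).neighborSet v).ncard}

/-- A colouring is extremal if there are distinct `r ∈ R^φ`, `b ∈ B^φ` with no
monochromatic `r`–`b` path. -/
def Extremal (G : SimpleGraph V) (φ : Sym2 V → Bool) : Prop :=
  ∃ r ∈ bigColourSet G φ true, ∃ b ∈ bigColourSet G φ false,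
    r ≠ b ∧ ¬ MonoPath G φ r b

/-- The number of edges of `G` with one endpoint in `U` and the other in `W`. -/
noncomputable def edgesBetween (G : SimpleGraph V) (U W : Set V) : ℕ :=
  {e ∈ G.edgeSet | ∃ u ∈ U, ∃ w ∈ W, e = s(u, w)}.ncard

/-- The number of edges of `G` with both endpoints in `A`. -/
noncomputable def edgesWithin (G : SimpleGraph V) (A : Set V) : ℕ :=
  {e ∈ G.edgeSet | ∀ v ∈ e, v ∈ A}.ncard

/-- The distribution of the binomial random graph `G(n,p)`: each potential
edge appears independently with probability `p`. -/
noncomputable def gnp (n : ℕ) (p : ℝ) : Measure (Sym2 (Fin n) → Bool) :=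
  Measure.pi fun _ => (PMF.bernoulli (min (Real.toNNReal p) 1) (min_le_right _ _)).toMeasure

/-- The graph encoded by an outcome `ω` of the edge indicators. -/
def graphOf {n : ℕ} (ω : Sym2 (Fin n) → Bool) : SimpleGraph (Fin n) :=
  SimpleGraph.fromEdgeSet {e | ω e = true}

open scoped NNReal Finset

section BernoulliProduct

variable {ι : Type*} [Fintype ι] {q : ℝ≥0} (hq : q ≤ 1)

lemma integral_prod_bernoulli (g : ι → Bool → ℝ) :
    ∫ ω, ∏ i, g i (ω i) ∂(Measure.pi fun _ : ι => (PMF.bernoulli q hq).toMeasure) =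
      ∏ i, ((1 - q) * g i false + q * g i true) := by
  rw [integral_fintype_prod_eq_prod]
  refine Finset.prod_congr rfl fun i _ => ?_
  simp [PMF.integral_eq_sum, PMF.bernoulli_apply, NNReal.coe_sub hq, add_comm]

/-- Markov's inequality for `1_{S all true} * 2^{t - X}`, where `X` counts the successes in `T`:
by independence its expectation factorises as `q^{#S} * 2^t * (1 - q/2)^{#T}`. -/
lemma measureReal_bernoulli_le {S T : Finset ι} (hST : Disjoint S T) (t : ℕ) :
    (Measure.pi fun _ : ι => (PMF.bernoulli q hq).toMeasure).real
        {ω | (∀ i ∈ S, ω i = true) ∧ #{i ∈ T | ω i = true} ≤ t} ≤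
      q ^ #S * 2 ^ t * (1 - q / 2) ^ #T := by
  classical
  set μ := Measure.pi fun _ : ι => (PMF.bernoulli q hq).toMeasure
  set E := {ω : ι → Bool | (∀ i ∈ S, ω i = true) ∧ #{i ∈ T | ω i = true} ≤ t}
  let g : ι → Bool → ℝ := fun i b =>
    (if i ∈ S then (if b then 1 else 0) else 1) * (if i ∈ T then (if b then 2⁻¹ else 1) else 1)
  have hmoment : ∀ i, (1 - q) * g i false + q * g i true =
      (if i ∈ S then (q : ℝ) else 1) * (if i ∈ T then 1 - (q : ℝ) / 2 else 1) := by
    intro i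
    by_cases hS : i ∈ S <;> by_cases hT : i ∈ T
    · exact absurd hT (Finset.disjoint_left.1 hST hS)
    all_goals simp [g, hS, hT] <;> ring
  have hmarkov : ∀ ω, E.indicator 1 ω ≤ (2 : ℝ) ^ t * ∏ i, g i (ω i) := by
    intro ω
    by_cases hω : ω ∈ E
    · obtain ⟨hS, hT⟩ := hω
      rw [Set.indicator_of_mem (by exact ⟨hS, hT⟩), Pi.one_apply]
      have hprod : ∏ i, g i (ω i) = 2⁻¹ ^ #{i ∈ T | ω i = true} := by
        rw [Finset.prod_mul_distrib, Fintype.prod_ite_mem, Fintype.prod_ite_mem,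
          Finset.prod_eq_one fun i hi => by simp [hS i hi], one_mul, Finset.prod_ite,
          Finset.prod_const, Finset.prod_const_one, mul_one]
      rw [hprod, inv_pow, ← div_eq_mul_inv, one_le_div (by positivity)]
      exact pow_le_pow_right₀ one_le_two hT
    · rw [Set.indicator_of_notMem hω]
      exact mul_nonneg (by positivity) (Finset.prod_nonneg fun i _ => by positivity)
  calc μ.real E = ∫ ω, E.indicator 1 ω ∂μ :=
        (integral_indicator_one ((Set.toFinite _).measurableSet)).symm
    _ ≤ ∫ ω, (2 : ℝ) ^ t * ∏ i, g i (ω i) ∂μ :=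
        integral_mono .of_finite .of_finite hmarkov
    _ = q ^ #S * 2 ^ t * (1 - q / 2) ^ #T := by
        rw [integral_const_mul, integral_prod_bernoulli, Finset.prod_congr rfl fun i _ => hmoment i,
          Finset.prod_mul_distrib, Fintype.prod_ite_mem, Fintype.prod_ite_mem,
          Finset.prod_const, Finset.prod_const]
        ring

end BernoulliProduct

section CrossPairs

lemma injOn_sym2_of_disjoint {A B : Finset V} (h : Disjoint A B) :
    Set.InjOn (fun x : V × V => s(x.1, x.2)) (A ×ˢ B : Finset (V × V)) := by
  rintro ⟨a, b⟩ hab ⟨a', b'⟩ hab' heq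
  simp only [Finset.coe_product, Set.mem_prod, Finset.mem_coe] at hab hab'
  rcases Sym2.eq_iff.1 heq with ⟨rfl, rfl⟩ | ⟨rfl, rfl⟩
  · rfl
  · exact absurd hab.2 (Finset.disjoint_left.1 h hab'.1)

variable [DecidableEq V]

def crossPairs (A B : Finset V) : Finset (Sym2 V) :=
  (A ×ˢ B).image fun x => s(x.1, x.2)

variable {A B C D : Finset V}

lemma card_crossPairs (h : Disjoint A B) : #(crossPairs A B) = #A * #B := by
  rw [crossPairs, Finset.card_image_of_injOn (by simpa using injOn_sym2_of_disjoint h),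
    Finset.card_product]

lemma disjoint_crossPairs (hAC : Disjoint A C) (hAD : Disjoint A D) :
    Disjoint (crossPairs A B) (crossPairs C D) := by
  simp only [crossPairs, Finset.disjoint_left, Finset.mem_image, Finset.mem_product]
  rintro _ ⟨⟨a, b⟩, ⟨ha, -⟩, rfl⟩ ⟨⟨c, d⟩, ⟨hc, hd⟩, heq⟩
  rcases Sym2.eq_iff.1 heq with ⟨rfl, -⟩ | ⟨-, rfl⟩
  · exact Finset.disjoint_left.1 hAC ha hc
  · exact Finset.disjoint_left.1 hAD ha hd

lemma card_crossPairs_filter (h : Disjoint A B) (P : Sym2 V → Prop) [DecidablePred P] :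
    #{e ∈ crossPairs A B | P e} = ∑ a ∈ A, #{b ∈ B | P s(a, b)} := by
  rw [crossPairs, Finset.filter_image, Finset.card_image_of_injOn
    ((injOn_sym2_of_disjoint h).mono (Finset.coe_subset.2 (Finset.filter_subset _ _))),
    Finset.card_filter, Finset.sum_product]
  simp only [Finset.card_filter]

end CrossPairs

section PoorlyJoined

variable [Fintype V]

def FewPoorlyJoined (G : SimpleGraph V) (s d m : ℝ) : Prop :=
  ∀ v, ∀ J ⊆ G.neighborSet v, s ≤ (J.ncard : ℝ) →
    (({x | x ∉ J ∧ ((G.neighborSet x ∩ J).ncard : ℝ) ≤ d}).ncard : ℝ) ≤ m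

variable [DecidableEq V] {G : SimpleGraph V} [DecidableRel G.Adj] {s d m : ℝ}

lemma exists_sparse_of_not_fewPoorlyJoined (hm : 0 ≤ m) (h : ¬ FewPoorlyJoined G s d m) :
    ∃ v, ∃ J A : Finset V, #J = ⌈s⌉₊ ∧ #A = ⌊m⌋₊ ∧ (∀ u ∈ J, G.Adj v u) ∧ v ∉ A ∧
      Disjoint A J ∧ ∑ a ∈ A, (#{u ∈ J | G.Adj a u} : ℝ) ≤ ⌊m⌋₊ * d := by
  classical
  simp only [FewPoorlyJoined, not_forall, not_le] at h
  obtain ⟨v, J, hJ, hsJ, hmB⟩ := h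
  set B := {x | x ∉ J ∧ ((G.neighborSet x ∩ J).ncard : ℝ) ≤ d}
  obtain ⟨J', hJ'sub, hJ'⟩ := Finset.exists_subset_card_eq (s := J.toFinset) (n := ⌈s⌉₊)
    (by rwa [← Set.ncard_eq_toFinset_card', Nat.ceil_le])
  have hB : ⌊m⌋₊ ≤ #(B.toFinset.erase v) := by
    have herase := Finset.pred_card_le_card_erase (s := B.toFinset) (a := v)
    have hfloor := (Nat.floor_lt hm).2 hmB
    rw [Set.ncard_eq_toFinset_card'] at hfloor
    omega
  obtain ⟨A, hAsub, hA⟩ := Finset.exists_subset_card_eq hB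
  have hJ'J : ∀ u ∈ J', u ∈ J := fun u hu => Set.mem_toFinset.1 (hJ'sub hu)
  have hAB : ∀ a ∈ A, a ≠ v ∧ a ∈ B := fun a ha => by
    simpa using hAsub ha
  refine ⟨v, J', A, hJ', hA, fun u hu => hJ (hJ'J u hu), fun hv => (hAB v hv).1 rfl,
    Finset.disjoint_left.2 fun a ha haJ => (hAB a ha).2.1 (hJ'J a haJ), ?_⟩
  calc ∑ a ∈ A, (#{u ∈ J' | G.Adj a u} : ℝ) ≤ ∑ _a ∈ A, d := by
        refine Finset.sum_le_sum fun a ha => le_trans ?_ (hAB a ha).2.2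
        have hsub : (↑({u ∈ J' | G.Adj a u}) : Set V) ⊆ G.neighborSet a ∩ J := fun u hu => by
          rw [Finset.mem_coe, Finset.mem_filter] at hu
          exact ⟨hu.2, hJ'J u hu.1⟩
        exact_mod_cast (Set.ncard_coe_finset _).symm.trans_le
          (Set.ncard_le_ncard hsub (Set.toFinite _))
    _ = ⌊m⌋₊ * d := by rw [Finset.sum_const, hA, nsmul_eq_mul]

end PoorlyJoined

section Witnesses

variable (V) [Fintype V] [DecidableEq V]

def witnessTriples (j a : ℕ) : Finset (V × Finset V × Finset V) :=
  {x ∈ Finset.univ ×ˢ (Finset.univ.powersetCard j ×ˢ Finset.univ.powersetCard a) |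
    x.1 ∉ x.2.1 ∧ x.1 ∉ x.2.2 ∧ Disjoint x.2.2 x.2.1}

lemma card_witnessTriples_le (j a : ℕ) :
    #(witnessTriples V j a) ≤ Fintype.card V * (Fintype.card V).choose j *
      (Fintype.card V).choose a := by
  refine (Finset.card_filter_le _ _).trans_eq ?_
  simp only [Finset.card_product, Finset.card_univ, Finset.card_powersetCard, mul_assoc]

end Witnesses

section Estimates

open Real Nat

lemma choose_mul_pow_le {x c : ℝ} {N j : ℕ} (hx : 0 ≤ x) (hc : 0 ≤ c) (h : x * N ≤ c * j) :
    (N.choose j : ℝ) * x ^ j ≤ (c * exp 1) ^ j :=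
  calc (N.choose j : ℝ) * x ^ j ≤ (N : ℝ) ^ j / (j ! : ℝ) * x ^ j := by
        gcongr; exact Nat.choose_le_pow_div j N
    _ = (x * N) ^ j / (j ! : ℝ) := by ring
    _ ≤ (c * j) ^ j / (j ! : ℝ) := by gcongr
    _ = c ^ j * ((j : ℝ) ^ j / (j ! : ℝ)) := by ring
    _ ≤ c ^ j * exp j := by gcongr; exact pow_div_factorial_le_exp _ (Nat.cast_nonneg j) j
    _ = (c * exp 1) ^ j := by rw [mul_pow, ← exp_nat_mul, mul_one]

lemma two_pow_le_exp (t : ℕ) : (2 : ℝ) ^ t ≤ exp (0.7 * t) := by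
  rw [mul_comm, exp_nat_mul]
  gcongr
  calc (2 : ℝ) = exp (log 2) := (exp_log two_pos).symm
    _ ≤ exp 0.7 := exp_le_exp.2 (log_two_lt_d9.le.trans (by norm_num))

lemma hundred_mul_exp_one_le : 100 * exp 1 ≤ exp 6 := by
  have h : (100 : ℝ) ≤ exp 1 ^ 5 :=
    (by norm_num : (100 : ℝ) ≤ 2.7 ^ 5).trans (pow_le_pow_left₀ (by norm_num)
      (exp_one_gt_d9.le.trans' (by norm_num)) 5)
  calc 100 * exp 1 ≤ exp 1 ^ 5 * exp 1 := by gcongr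
    _ = exp 6 := by rw [← exp_nat_mul, ← exp_add]; norm_num

lemma failure_exponent_le {p n L j a t : ℝ} (hp : 0 < p) (hp1 : p ≤ 1) (hL : 1 ≤ L)
    (hdense : 100000 * L ≤ n * p ^ 2) (hj : p * n / 100 ≤ j) (hj' : j ≤ p * n / 100 + 1)
    (ha : 100 - p ≤ a * p) (ha' : a * p ≤ 100) (ht : t ≤ a * (p ^ 2 * n / 200)) :
    L + a * L + 0.7 * t + 6 * j - p / 2 * (a * j) ≤ -L := by
  have hn : 0 ≤ n := by nlinarith
  have hLn : L ≤ p * n / 100000 := by nlinarith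
  have haL : a * L ≤ p * n / 1000 := by
    refine le_of_mul_le_mul_left ?_ hp
    nlinarith
  have htn : t ≤ p * n / 2 := by nlinarith
  have haj : (100 - p) * (p * n) / 200 ≤ p / 2 * (a * j) := by nlinarith
  nlinarith

end Estimates

variable {n : ℕ} {p : ℝ}

instance : IsProbabilityMeasure (gnp n p) := by
  unfold gnp; infer_instance

lemma graphOf_adj {ω : Sym2 (Fin n) → Bool} {a b : Fin n} :
    (graphOf ω).Adj a b ↔ ω s(a, b) = true ∧ a ≠ b := by
  simp [graphOf, SimpleGraph.fromEdgeSet_adj]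

lemma not_fewPoorlyJoined_subset {s d m : ℝ} (hm : 0 ≤ m) :
    {ω : Sym2 (Fin n) → Bool | ¬ FewPoorlyJoined (graphOf ω) s d m} ⊆
      ⋃ x ∈ witnessTriples (Fin n) ⌈s⌉₊ ⌊m⌋₊,
        {ω | (∀ e ∈ crossPairs {x.1} x.2.1, ω e = true) ∧
          #{e ∈ crossPairs x.2.2 x.2.1 | ω e = true} ≤ ⌊⌊m⌋₊ * d⌋₊} := by
  classical
  intro ω hω
  obtain ⟨v, J, A, hJ, hA, hadj, hvA, hAJ, hsum⟩ := exists_sparse_of_not_fewPoorlyJoined hm hω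
  have hvJ : v ∉ J := fun hv => (graphOf ω).irrefl (hadj v hv)
  refine Set.mem_biUnion (x := (v, J, A)) (by simp [witnessTriples, hJ, hA, hvJ, hvA, hAJ]) ⟨?_, ?_⟩
  · simp only [crossPairs, Finset.mem_image, Finset.mem_product, Finset.mem_singleton]
    rintro _ ⟨⟨_, u⟩, ⟨rfl, hu⟩, rfl⟩
    exact (graphOf_adj.1 (hadj u hu)).1
  · rw [card_crossPairs_filter hAJ]
    refine Nat.le_floor (le_trans (le_of_eq ?_) hsum)
    push_cast
    refine Finset.sum_congr rfl fun a ha => ?_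
    congr 2
    refine Finset.filter_congr fun u hu => ?_
    rw [graphOf_adj, and_iff_left]
    rintro rfl
    exact Finset.disjoint_left.1 hAJ ha hu

lemma measureReal_not_fewPoorlyJoined_le (hp0 : 0 ≤ p) (hp1 : p ≤ 1) {s d m : ℝ} (hm : 0 ≤ m) :
    (gnp n p).real {ω | ¬ FewPoorlyJoined (graphOf ω) s d m} ≤
      n * n.choose ⌈s⌉₊ * n.choose ⌊m⌋₊ *
        (p ^ ⌈s⌉₊ * 2 ^ ⌊⌊m⌋₊ * d⌋₊ * (1 - p / 2) ^ (⌊m⌋₊ * ⌈s⌉₊)) := by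
  have hq : ((min p.toNNReal 1 : ℝ≥0) : ℝ) = p := by
    rw [min_eq_left (Real.toNNReal_le_one.2 hp1), Real.coe_toNNReal _ hp0]
  calc (gnp n p).real {ω | ¬ FewPoorlyJoined (graphOf ω) s d m}
      ≤ ∑ x ∈ witnessTriples (Fin n) ⌈s⌉₊ ⌊m⌋₊, (gnp n p).real
          {ω | (∀ e ∈ crossPairs {x.1} x.2.1, ω e = true) ∧
            #{e ∈ crossPairs x.2.2 x.2.1 | ω e = true} ≤ ⌊⌊m⌋₊ * d⌋₊} :=
        (measureReal_mono (not_fewPoorlyJoined_subset hm) (measure_ne_top _ _)).trans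
          (measureReal_biUnion_finset_le _ _)
    _ ≤ ∑ _x ∈ witnessTriples (Fin n) ⌈s⌉₊ ⌊m⌋₊,
          p ^ ⌈s⌉₊ * 2 ^ ⌊⌊m⌋₊ * d⌋₊ * (1 - p / 2) ^ (⌊m⌋₊ * ⌈s⌉₊) := by
        refine Finset.sum_le_sum fun ⟨v, J, A⟩ hx => ?_
        simp only [witnessTriples, Finset.mem_filter, Finset.mem_product,
          Finset.mem_powersetCard_univ] at hx
        obtain ⟨⟨-, hJ, hA⟩, hvJ, hvA, hAJ⟩ := hx
        have := measureReal_bernoulli_le (min_le_right p.toNNReal 1)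
          (disjoint_crossPairs (B := J) (Finset.disjoint_singleton_left.2 hvA)
            (Finset.disjoint_singleton_left.2 hvJ)) ⌊⌊m⌋₊ * d⌋₊
        rwa [hq, card_crossPairs (Finset.disjoint_singleton_left.2 hvJ), card_crossPairs hAJ,
          Finset.card_singleton, one_mul, hJ, hA] at this
    _ ≤ n * n.choose ⌈s⌉₊ * n.choose ⌊m⌋₊ *
          (p ^ ⌈s⌉₊ * 2 ^ ⌊⌊m⌋₊ * d⌋₊ * (1 - p / 2) ^ (⌊m⌋₊ * ⌈s⌉₊)) := by
        rw [Finset.sum_const, nsmul_eq_mul]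
        gcongr
        · exact mul_nonneg (by positivity) (pow_nonneg (by linarith) _)
        · exact_mod_cast (card_witnessTriples_le (Fin n) _ _).trans_eq (by simp)

open Real in
lemma failure_bound_le_inv (hp0 : 0 ≤ p) (hp1 : p ≤ 1) (hL : 1 ≤ log n)
    (hdense : 100000 * log n ≤ n * p ^ 2) :
    n * n.choose ⌈p * n / 100⌉₊ * n.choose ⌊100 / p⌋₊ *
      (p ^ ⌈p * n / 100⌉₊ * 2 ^ ⌊⌊100 / p⌋₊ * (p ^ 2 * n / 200)⌋₊ *
        (1 - p / 2) ^ (⌊100 / p⌋₊ * ⌈p * n / 100⌉₊)) ≤ (n : ℝ)⁻¹ := by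
  have hp : 0 < p := lt_of_le_of_ne hp0 fun h => by subst h; nlinarith
  have hn : 0 < (n : ℝ) := by nlinarith
  set j := ⌈p * n / 100⌉₊
  set a := ⌊100 / p⌋₊
  set t := ⌊(a : ℝ) * (p ^ 2 * n / 200)⌋₊
  have hj : p * n / 100 ≤ j := Nat.le_ceil _
  have hj' : (j : ℝ) ≤ p * n / 100 + 1 := (Nat.ceil_lt_add_one (by positivity)).le
  have ha : 100 - p ≤ a * p := by
    have := Nat.lt_floor_add_one (100 / p)
    rw [div_lt_iff₀ hp] at this
    linarith
  have ha' : (a : ℝ) * p ≤ 100 := (le_div_iff₀ hp).1 (Nat.floor_le (by positivity))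
  have ht : (t : ℝ) ≤ a * (p ^ 2 * n / 200) := Nat.floor_le (by positivity)
  have hchoose : (n.choose a : ℝ) ≤ exp (a * log n) := by
    rw [exp_nat_mul, exp_log hn]; exact_mod_cast Nat.choose_le_pow n a
  have hstar : (n.choose j : ℝ) * p ^ j ≤ exp (6 * j) := by
    rw [mul_comm 6, exp_nat_mul]
    exact (choose_mul_pow_le hp0 (by norm_num) (by linarith)).trans
      (pow_le_pow_left₀ (by positivity) hundred_mul_exp_one_le j)
  have hmiss : (1 - p / 2) ^ (a * j) ≤ exp (-(p / 2) * (a * j)) := by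
    rw [← Nat.cast_mul, mul_comm (-(p / 2)), exp_nat_mul]
    exact pow_le_pow_left₀ (by linarith) (one_sub_le_exp_neg _) _
  calc (n : ℝ) * n.choose j * n.choose a * (p ^ j * 2 ^ t * (1 - p / 2) ^ (a * j))
      = n * n.choose a * 2 ^ t * (1 - p / 2) ^ (a * j) * (n.choose j * p ^ j) := by ring
    _ ≤ exp (log n) * exp (a * log n) * exp (0.7 * t) * exp (-(p / 2) * (a * j)) *
          exp (6 * j) := by
        rw [exp_log hn]
        gcongr
        exacts [pow_nonneg (by linarith) _, two_pow_le_exp t]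
    _ = exp (log n + a * log n + 0.7 * t + 6 * j - p / 2 * (a * j)) := by
        simp only [← exp_add]; ring_nf
    _ ≤ exp (-log n) :=
        exp_le_exp.2 (failure_exponent_le hp hp1 hL hdense hj hj' ha ha' ht)
    _ = (n : ℝ)⁻¹ := by rw [exp_neg, exp_log hn]

lemma measure_not_fewPoorlyJoined_le_inv (hp0 : 0 ≤ p) (hp1 : p ≤ 1) (hL : 1 ≤ Real.log n)
    (hdense : 100000 * Real.log n ≤ n * p ^ 2) :
    gnp n p {ω | ¬ FewPoorlyJoined (graphOf ω) (p * n / 100) (p ^ 2 * n / 200) (100 / p)} ≤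
      ENNReal.ofReal (n : ℝ)⁻¹ := by
  rw [← ofReal_measureReal]
  exact ENNReal.ofReal_le_ofReal ((measureReal_not_fewPoorlyJoined_le hp0 hp1
    (by positivity)).trans (failure_bound_le_inv hp0 hp1 hL hdense))

lemma one_le_log_and_le_of_le_div_sqrt (hn : 3 ≤ n) (h : 400 ≤ p / √(Real.log n / n)) :
    1 ≤ Real.log n ∧ 100000 * Real.log n ≤ n * p ^ 2 := by
  have hn' : (3 : ℝ) ≤ n := by exact_mod_cast hn
  have hL : 1 ≤ Real.log n := by
    rw [Real.le_log_iff_exp_le (by linarith)]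
    linarith [Real.exp_one_lt_d9]
  refine ⟨hL, ?_⟩
  have hsqrt : 0 < √(Real.log n / n) := Real.sqrt_pos.2 (by positivity)
  have hp : 400 * √(Real.log n / n) ≤ p := (le_div_iff₀ hsqrt).1 h
  have hsq : 160000 * (Real.log n / n) ≤ p ^ 2 := by
    calc 160000 * (Real.log n / n) = (400 * √(Real.log n / n)) ^ 2 := by
          rw [mul_pow, Real.sq_sqrt (by positivity)]; norm_num
      _ ≤ p ^ 2 := pow_le_pow_left₀ (by positivity) hp 2
  rw [mul_div_assoc', div_le_iff₀ (by linarith)] at hsq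
  linarith

lemma tendsto_measure_of_tendsto_measure_compl {Ω : ℕ → Type*} [∀ n, MeasurableSpace (Ω n)]
    {μ : ∀ n, Measure (Ω n)} [∀ n, IsProbabilityMeasure (μ n)] {s : ∀ n, Set (Ω n)}
    (hs : ∀ n, MeasurableSet (s n)) (h : Tendsto (fun n => μ n (s n)ᶜ) atTop (𝓝 0)) :
    Tendsto (fun n => μ n (s n)) atTop (𝓝 1) := by
  have hsub := ENNReal.Tendsto.sub tendsto_const_nhds h (Or.inl ENNReal.one_ne_top)
  rw [tsub_zero] at hsub
  refine hsub.congr fun n => ?_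
  rw [prob_compl_eq_one_sub (hs n), ENNReal.sub_sub_cancel ENNReal.one_ne_top prob_le_one]

/-- If `p ≫ ((log n)/n)^{1/2}`, then a.a.s.: for every vertex
`v` and every `J ⊆ N(v)` with `|J| ≥ pn/100`, all but at most `100/p` vertices
`x ∉ J` satisfy `|N(x) ∩ J| > p²n/200`. -/
theorem stmt_5 (p : ℕ → ℝ) (hp : ∀ n, 0 ≤ p n ∧ p n ≤ 1)
    (hgrow : Tendsto (fun n : ℕ => p n / Real.sqrt (Real.log n / n)) atTop atTop) :
    Tendsto (fun n : ℕ => gnp n (p n)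
      {ω | ∀ v : Fin n, ∀ J ⊆ (graphOf ω).neighborSet v,
              p n * n / 100 ≤ (J.ncard : ℝ) →
              (({x : Fin n | x ∉ J ∧
                  (((graphOf ω).neighborSet x ∩ J).ncard : ℝ) ≤ p n ^ 2 * n / 200}).ncard : ℝ)
                ≤ 100 / p n})
      atTop (𝓝 1) := by
  refine tendsto_measure_of_tendsto_measure_compl
    (s := fun n => {ω | FewPoorlyJoined (graphOf ω) (p n * n / 100) (p n ^ 2 * n / 200) (100 / p n)})
    (fun _ => (Set.toFinite _).measurableSet) ?_
  have hbad : ∀ᶠ n : ℕ in atTop, gnp n (p n)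
      {ω | ¬ FewPoorlyJoined (graphOf ω) (p n * n / 100) (p n ^ 2 * n / 200) (100 / p n)} ≤
        ENNReal.ofReal (n : ℝ)⁻¹ := by
    filter_upwards [hgrow.eventually_ge_atTop 400, eventually_ge_atTop 3] with n hratio hn
    obtain ⟨hL, hdense⟩ := one_le_log_and_le_of_le_div_sqrt hn hratio
    exact measure_not_fewPoorlyJoined_le_inv (hp n).1 (hp n).2 hL hdense
  have hinv : Tendsto (fun n : ℕ => ENNReal.ofReal (n : ℝ)⁻¹) atTop (𝓝 0) :=
    ENNReal.ofReal_zero ▸ (ENNReal.continuous_ofReal.tendsto 0).comp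
      tendsto_inv_atTop_nhds_zero_nat
  exact tendsto_of_tendsto_of_tendsto_of_le_of_le' tendsto_const_nhds hinv
    (Eventually.of_forall fun _ => bot_le) hbad

end MonochromaticTrees
end

section
/- If p = p(n) ≫ ((log n)/n)^{1/2}, then asymptotically almost surely G ∈ G(n,p) satisfies: every set A ⊆ V(G) with |A| ≤ 100/p has 2 e_G(A) ≤ p²n|A|/4, where e_G(A) denotes the number of edges of G with both endpoints in A. -/
open MeasureTheory Filter Topology SimpleGraph

namespace MonochromaticTrees

variable {V : Type*} {C : Type*}

/-!
A union bound over sets. If `2 e(A) > p²n|A|/4`, then `A` spans at least `t = ⌊p²n|A|/8⌋ + 1`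
edges, which has probability at most `C(|A|², t) pᵗ ≤ (e |A|² p / t)ᵗ`. As `|A| p ≤ 100`
and `p²n ≥ 6400 log n`, the base is at most `e⁻¹` and `t ≥ 3 |A| log n`, so this is at
most `n^(-3|A|)`; summed over all nonempty `A ⊆ [n]` it is at most `e / n²`.
-/

open Finset Real

instance (n : ℕ) (p : ℝ) : IsProbabilityMeasure (gnp n p) := by
  unfold gnp; infer_instance

lemma gnp_forall_mem_true_le (n : ℕ) (p : ℝ) (S : Finset (Sym2 (Fin n))) :
    gnp n p {ω | ∀ e ∈ S, ω e = true} ≤ ENNReal.ofReal p ^ #S := by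
  have hS : {ω : Sym2 (Fin n) → Bool | ∀ e ∈ S, ω e = true} =
      (S : Set _).pi fun _ => {true} := by
    ext ω; simp
  rw [hS, gnp, Measure.pi_pi_finset, prod_const]
  -- `gnp` caps the edge probability at `1`, so this is an equality only for `p ≤ 1`.
  gcongr
  rw [PMF.toMeasure_apply_singleton _ _ (measurableSet_singleton _)]
  exact ENNReal.coe_le_coe.2 (min_le_left _ _)

lemma exists_powersetCard_of_le_edgesWithin {n : ℕ} {ω : Sym2 (Fin n) → Bool}
    {F : Finset (Fin n)} {t : ℕ} (ht : t ≤ edgesWithin (graphOf ω) F) :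
    ∃ S ∈ F.sym2.powersetCard t, ∀ e ∈ S, ω e = true := by
  classical
  set E := {e ∈ (graphOf ω).edgeSet | ∀ v ∈ e, v ∈ (F : Set (Fin n))}
  have hE : E.toFinset ⊆ F.sym2 := by
    intro e he
    simp only [Set.mem_toFinset, E, Set.mem_ofPred_eq] at he
    exact mem_sym2_iff.2 he.2
  rw [edgesWithin, Set.ncard_eq_toFinset_card'] at ht
  obtain ⟨S, hSE, hSt⟩ := exists_subset_card_eq ht
  refine ⟨S, mem_powersetCard.2 ⟨hSE.trans hE, hSt⟩, fun e he => ?_⟩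
  have := hSE he
  simp only [Set.mem_toFinset, Set.mem_ofPred_eq, graphOf, edgeSet_fromEdgeSet] at this
  exact this.1.1

lemma edgesWithin_empty {V : Type*} (G : SimpleGraph V) : edgesWithin G ∅ = 0 := by
  have : {e ∈ G.edgeSet | ∀ v ∈ e, v ∈ (∅ : Set V)} = ∅ := by
    ext e
    induction e using Sym2.ind with
    | h a b => exact ⟨fun ⟨_, h⟩ => h a (Sym2.mem_mk_left a b), False.elim⟩
  rw [edgesWithin, this, Set.ncard_empty]

lemma gnp_le_edgesWithin_le (n : ℕ) (p : ℝ) (F : Finset (Fin n)) (t : ℕ) :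
    gnp n p {ω | t ≤ edgesWithin (graphOf ω) F}
      ≤ (#F.sym2).choose t * ENNReal.ofReal p ^ t := by
  calc gnp n p {ω | t ≤ edgesWithin (graphOf ω) F}
      ≤ gnp n p (⋃ S ∈ F.sym2.powersetCard t, {ω | ∀ e ∈ S, ω e = true}) := by
        refine measure_mono fun ω hω => ?_
        obtain ⟨S, hS, hω⟩ := exists_powersetCard_of_le_edgesWithin hω
        exact Set.mem_biUnion hS hω
    _ ≤ ∑ S ∈ F.sym2.powersetCard t, gnp n p {ω | ∀ e ∈ S, ω e = true} :=
        measure_biUnion_finset_le _ _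
    _ ≤ ∑ S ∈ F.sym2.powersetCard t, ENNReal.ofReal p ^ t := by
        refine sum_le_sum fun S hS => ?_
        rw [← (mem_powersetCard.1 hS).2]
        exact gnp_forall_mem_true_le n p S
    _ = (#F.sym2).choose t * ENNReal.ofReal p ^ t := by
        rw [sum_const, card_powersetCard, nsmul_eq_mul]

lemma choose_mul_pow_le_s10 (N t : ℕ) {q : ℝ} (hq : 0 ≤ q) :
    (N.choose t : ℝ) * q ^ t ≤ (exp 1 * N * q / t) ^ t := by
  rcases t.eq_zero_or_pos with rfl | ht
  · simp
  have ht' : (0 : ℝ) < t := by exact_mod_cast ht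
  have hfact : (t : ℝ) ^ t / t.factorial ≤ exp 1 ^ t := by
    simpa [← exp_nat_mul] using pow_div_factorial_le_exp (x := t) t.cast_nonneg t
  calc (N.choose t : ℝ) * q ^ t ≤ (N : ℝ) ^ t / t.factorial * q ^ t := by
        gcongr; exact Nat.choose_le_pow_div t N
    _ = ((t : ℝ) ^ t / t.factorial) * (N * q / t) ^ t := by
        rw [div_pow, mul_pow]; field_simp
    _ ≤ exp 1 ^ t * (N * q / t) ^ t := by gcongr
    _ = (exp 1 * N * q / t) ^ t := by rw [← mul_pow]; ring

lemma choose_mul_pow_le_exp_neg (N t : ℕ) {q : ℝ} (hq : 0 ≤ q) (h : exp 2 * N * q ≤ t) :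
    (N.choose t : ℝ) * q ^ t ≤ exp (-t) := by
  rcases t.eq_zero_or_pos with rfl | ht
  · simp
  have ht' : (0 : ℝ) < t := by exact_mod_cast ht
  have hbase : exp 1 * N * q / t ≤ exp (-1) := by
    have he : exp 1 = exp (-1) * exp 2 := by rw [← exp_add]; norm_num
    rw [div_le_iff₀ ht', he, mul_assoc, mul_assoc, ← mul_assoc (exp 2)]
    gcongr
  calc (N.choose t : ℝ) * q ^ t ≤ (exp 1 * N * q / t) ^ t := choose_mul_pow_le_s10 N t hq
    _ ≤ exp (-1) ^ t := by gcongr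
    _ = exp (-t) := by rw [← exp_nat_mul]; ring_nf

lemma exp_two_lt : exp 2 < 7.5 := by
  have h := exp_one_lt_d9
  rw [show (2 : ℝ) = 1 + 1 by norm_num, exp_add]
  nlinarith [exp_pos 1]

lemma gnp_edgesWithin_gt_le {n : ℕ} {p : ℝ} (hp : 0 ≤ p) (hlog : 1 ≤ log n)
    (hpn : 6400 * log n ≤ p ^ 2 * n) (F : Finset (Fin n)) (hFp : #F * p ≤ 100) :
    gnp n p {ω | p ^ 2 * n * #F / 4 < 2 * (edgesWithin (graphOf ω) F : ℝ)}
      ≤ ENNReal.ofReal ((n : ℝ) ^ (3 * #F))⁻¹ := by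
  have hn : (0 : ℝ) < n := one_pos.trans ((log_pos_iff n.cast_nonneg).1 (by linarith))
  set a := #F
  set x := p ^ 2 * n * a / 8 with hx_def
  set t := ⌊x⌋₊ + 1
  have hx : 800 * a * log n ≤ x := by
    have : 6400 * log n * a ≤ p ^ 2 * n * a := by gcongr
    linarith
  have hxt : x < t := by simpa [t] using Nat.lt_floor_add_one x
  have hN : (#F.sym2 : ℝ) ≤ a ^ 2 := by
    have : #F.sym2 ≤ a ^ 2 := by
      rw [card_sym2, Nat.choose_two_right, Nat.add_sub_cancel]
      exact Nat.div_le_of_le_mul (by nlinarith)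
    exact_mod_cast this
  have hdense : exp 2 * #F.sym2 * p ≤ t := by
    calc exp 2 * #F.sym2 * p ≤ 7.5 * a ^ 2 * p := by gcongr; exact exp_two_lt.le
      _ = 7.5 * a * (a * p) := by ring
      _ ≤ 7.5 * a * 100 := by gcongr
      _ ≤ 800 * a * log n := by nlinarith [a.cast_nonneg (α := ℝ)]
      _ ≤ t := hx.trans hxt.le
  calc gnp n p {ω | p ^ 2 * n * a / 4 < 2 * (edgesWithin (graphOf ω) F : ℝ)}
      ≤ gnp n p {ω | t ≤ edgesWithin (graphOf ω) F} := by
        refine measure_mono fun ω hω => ?_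
        have : x < edgesWithin (graphOf ω) F := by
          simp only [Set.mem_ofPred_eq] at hω; linarith [hx_def]
        exact (Nat.floor_lt (by positivity)).2 this
    _ ≤ (#F.sym2).choose t * ENNReal.ofReal p ^ t := gnp_le_edgesWithin_le n p F t
    _ = ENNReal.ofReal ((#F.sym2).choose t * p ^ t) := by
        rw [ENNReal.ofReal_mul (by positivity), ENNReal.ofReal_pow hp, ENNReal.ofReal_natCast]
    _ ≤ ENNReal.ofReal (exp (-t)) :=
        ENNReal.ofReal_le_ofReal (choose_mul_pow_le_exp_neg _ t hp hdense)
    _ ≤ ENNReal.ofReal ((n : ℝ) ^ (3 * a))⁻¹ := by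
        refine ENNReal.ofReal_le_ofReal ?_
        rw [← exp_log hn, ← exp_nat_mul, ← exp_neg, exp_le_exp]
        push_cast
        nlinarith [a.cast_nonneg (α := ℝ)]

lemma sum_nonempty_inv_pow_le (n : ℕ) :
    ∑ F ∈ (univ : Finset (Finset (Fin n))).filter Finset.Nonempty, ((n : ℝ) ^ (3 * #F))⁻¹
      ≤ exp 1 / n ^ 2 := by
  rcases n.eq_zero_or_pos with rfl | hn
  · simp [eq_empty_of_isEmpty]
  have hn1 : (1 : ℝ) ≤ n := by exact_mod_cast hn
  calc ∑ F ∈ (univ : Finset (Finset (Fin n))).filter Finset.Nonempty,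
          ((n : ℝ) ^ (3 * #F))⁻¹
      ≤ ∑ F ∈ (univ : Finset (Finset (Fin n))).filter Finset.Nonempty,
          ((n : ℝ) ^ 2)⁻¹ * (n : ℝ)⁻¹ ^ #F := by
        refine sum_le_sum fun F hF => ?_
        have hF : 1 ≤ #F := card_pos.2 (mem_filter.1 hF).2
        rw [inv_pow, ← mul_inv, ← pow_add]
        gcongr
        omega
    _ ≤ ∑ F : Finset (Fin n), ((n : ℝ) ^ 2)⁻¹ * (n : ℝ)⁻¹ ^ #F :=
        sum_le_sum_of_subset_of_nonneg (filter_subset _ _) fun _ _ _ => by positivity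
    _ = ((n : ℝ) ^ 2)⁻¹ * (1 + (n : ℝ)⁻¹) ^ n := by
        have := Fintype.sum_pow_mul_eq_add_pow (Fin n) (n : ℝ)⁻¹ 1
        simp only [one_pow, mul_one, Fintype.card_fin] at this
        rw [← mul_sum, this, add_comm]
    _ ≤ exp 1 / n ^ 2 := by
        rw [div_eq_inv_mul]; gcongr; exact one_add_inv_pow_le_exp

lemma gnp_exists_dense_set_le {n : ℕ} {p : ℝ} (hp : 0 < p) (hlog : 1 ≤ log n)
    (hpn : 6400 * log n ≤ p ^ 2 * n) :
    gnp n p {ω | ∃ A : Set (Fin n), (A.ncard : ℝ) ≤ 100 / p ∧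
        p ^ 2 * n * A.ncard / 4 < 2 * (edgesWithin (graphOf ω) A : ℝ)}
      ≤ ENNReal.ofReal (exp 1 / n ^ 2) := by
  classical
  set s := (univ : Finset (Finset (Fin n))).filter fun F => F.Nonempty ∧ #F * p ≤ 100
  calc _ ≤ gnp n p (⋃ F ∈ s,
          {ω | p ^ 2 * n * #F / 4 < 2 * (edgesWithin (graphOf ω) F : ℝ)}) := by
        refine measure_mono fun ω ⟨A, hAp, hA⟩ => Set.mem_biUnion (x := A.toFinset) ?_ ?_
        · refine mem_filter.2 ⟨mem_univ _, ?_, ?_⟩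
          · rw [Set.toFinset_nonempty, Set.nonempty_iff_ne_empty]
            rintro rfl
            simp [edgesWithin_empty] at hA
          · rwa [← Set.ncard_eq_toFinset_card', ← le_div_iff₀ hp]
        · simpa [Set.ncard_eq_toFinset_card'] using hA
    _ ≤ ∑ F ∈ s, ENNReal.ofReal ((n : ℝ) ^ (3 * #F))⁻¹ :=
        (measure_biUnion_finset_le _ _).trans <| sum_le_sum fun F hF =>
          gnp_edgesWithin_gt_le hp.le hlog hpn F (mem_filter.1 hF).2.2
    _ = ENNReal.ofReal (∑ F ∈ s, ((n : ℝ) ^ (3 * #F))⁻¹) :=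
        (ENNReal.ofReal_sum_of_nonneg fun _ _ => by positivity).symm
    _ ≤ ENNReal.ofReal (exp 1 / n ^ 2) := by
        refine ENNReal.ofReal_le_ofReal ((sum_le_sum_of_subset_of_nonneg ?_ ?_).trans
          (sum_nonempty_inv_pow_le n))
        · exact fun F hF => mem_filter.2 ⟨mem_univ _, (mem_filter.1 hF).2.1⟩
        · intros; positivity

lemma pos_and_sq_mul_le_of_le_div_sqrt {x L p c : ℝ} (hx : 0 < x) (hL : 0 < L) (hc : 0 < c)
    (h : c ≤ p / √(L / x)) : 0 < p ∧ c ^ 2 * L ≤ p ^ 2 * x := by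
  have hs : 0 < √(L / x) := sqrt_pos.2 (div_pos hL hx)
  have hcp : c * √(L / x) ≤ p := (le_div_iff₀ hs).1 h
  refine ⟨lt_of_lt_of_le (by positivity) hcp, ?_⟩
  have hsq : c ^ 2 * (L / x) ≤ p ^ 2 := by
    simpa [mul_pow, sq_sqrt (div_pos hL hx).le] using pow_le_pow_left₀ (by positivity) hcp 2
  rwa [mul_div_assoc', div_le_iff₀ hx] at hsq

theorem stmt_10_general (p : ℕ → ℝ)
    (hgrow : Tendsto (fun n : ℕ => p n / Real.sqrt (Real.log n / n)) atTop atTop) :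
    Tendsto (fun n : ℕ => gnp n (p n)
      {ω | ∀ A : Set (Fin n), (A.ncard : ℝ) ≤ 100 / p n →
              2 * (edgesWithin (graphOf ω) A : ℝ) ≤ p n ^ 2 * n * A.ncard / 4})
      atTop (𝓝 1) := by
  set bad := fun n : ℕ => {ω : Sym2 (Fin n) → Bool | ∃ A : Set (Fin n),
    (A.ncard : ℝ) ≤ 100 / p n ∧
      p n ^ 2 * n * A.ncard / 4 < 2 * (edgesWithin (graphOf ω) A : ℝ)}
  have hbound :
      ∀ᶠ n : ℕ in atTop, gnp n (p n) (bad n) ≤ ENNReal.ofReal (exp 1 / n ^ 2) := by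
    filter_upwards [(tendsto_log_atTop.comp tendsto_natCast_atTop_atTop).eventually_ge_atTop 1,
      hgrow.eventually_ge_atTop 80] with n hlog hratio
    rw [Function.comp_apply] at hlog
    have hn : (0 : ℝ) < n := one_pos.trans ((log_pos_iff n.cast_nonneg).1 (by linarith))
    obtain ⟨hp, hpn⟩ := pos_and_sq_mul_le_of_le_div_sqrt hn (by linarith) (by norm_num) hratio
    exact gnp_exists_dense_set_le hp hlog (by linarith)
  have hbad : Tendsto (fun n => gnp n (p n) (bad n)) atTop (𝓝 0) := by
    have hlim := ENNReal.tendsto_ofReal (tendsto_const_div_pow (exp 1) 2 two_ne_zero)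
    rw [ENNReal.ofReal_zero] at hlim
    exact tendsto_of_tendsto_of_tendsto_of_le_of_le' tendsto_const_nhds hlim
      (Eventually.of_forall fun _ => zero_le) hbound
  have hgood : ∀ n, gnp n (p n) {ω | ∀ A : Set (Fin n), (A.ncard : ℝ) ≤ 100 / p n →
      2 * (edgesWithin (graphOf ω) A : ℝ) ≤ p n ^ 2 * n * A.ncard / 4} =
        1 - gnp n (p n) (bad n) := by
    intro n
    rw [← prob_compl_eq_one_sub (Set.toFinite _).measurableSet]
    congr 1; ext ω; simp [bad]
  simpa [hgood] using ENNReal.Tendsto.sub tendsto_const_nhds hbad (Or.inr ENNReal.zero_ne_top)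

/-- If `p ≫ ((log n)/n)^{1/2}`, then a.a.s. every set `A`
with `|A| ≤ 100/p` satisfies `2 e(A) ≤ p²n|A|/4`. -/
theorem stmt_10 (p : ℕ → ℝ) (hp : ∀ n, 0 ≤ p n ∧ p n ≤ 1)
    (hgrow : Tendsto (fun n : ℕ => p n / Real.sqrt (Real.log n / n)) atTop atTop) :
    Tendsto (fun n : ℕ => gnp n (p n)
      {ω | ∀ A : Set (Fin n), (A.ncard : ℝ) ≤ 100 / p n →
              2 * (edgesWithin (graphOf ω) A : ℝ) ≤ p n ^ 2 * n * A.ncard / 4})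
      atTop (𝓝 1) :=
  stmt_10_general p hgrow

end MonochromaticTrees
end
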